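/- With the operators z_1,…,z_n on L²(X_{q,n}, μ_n) defined by (z_n h)(t) = q t_n h(t_1,…,q t_n) and (z_j h)(t) = sqrt((q t_j)² − 1) t_{j+1}⋯t_n h(t_1,…,q t_j,…,t_n) for j < n, the formal adjoints on the domain D satisfy z_n z_n* = q² z_n* z_n and, for j < n, z_j z_j* − q² z_j* z_j = −(1−q²) Σ_{i>j} z_i* z_i on D. -/
import Mathlib


open Classical

/-- The set I_q = {q^{-m} : m ∈ ℕ, m ≥ 1}. -/
def Iq (q : ℝ) : Set ℝ := {t : ℝ | ∃ m : ℕ, t = q ^ (-((m : ℤ) + 1))}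

/-- The operators z_1, …, z_n on functions on X_{q,n} = I_q^{n-1} × [0,∞):
(z_n h)(t) = q t_n h(t_1,…,q t_n) and, for j < n,
(z_j h)(t) = χ_{I_q}(q t_j) sqrt((q t_j)² − 1) t_{j+1}⋯t_n h(t_1,…,q t_j,…,t_n). -/
noncomputable def zop (q : ℝ) {n : ℕ} (j : Fin n) (h : (Fin n → ℝ) → ℂ)
    (t : Fin n → ℝ) : ℂ :=
  if (j : ℕ) + 1 = n then
    ((q * t j : ℝ) : ℂ) * h (Function.update t j (q * t j))
  else
    ((if q * t j ∈ Iq q then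
        Real.sqrt ((q * t j) ^ 2 - 1) * ∏ i ∈ Finset.univ.filter (fun i => j < i), t i
      else 0 : ℝ) : ℂ) * h (Function.update t j (q * t j))

/-- The formal adjoints z_1*, …, z_n* with respect to the L²(X_{q,n}, μ_n)
inner product: (z_n* h)(t) = t_n h(t_1,…,q⁻¹ t_n) and, for j < n,
(z_j* h)(t) = χ_{I_q}(t_j) sqrt(t_j² − 1) t_{j+1}⋯t_n h(t_1,…,q⁻¹ t_j,…,t_n). -/
noncomputable def zsop (q : ℝ) {n : ℕ} (j : Fin n) (h : (Fin n → ℝ) → ℂ)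
    (t : Fin n → ℝ) : ℂ :=
  if (j : ℕ) + 1 = n then
    ((t j : ℝ) : ℂ) * h (Function.update t j (q⁻¹ * t j))
  else
    ((if t j ∈ Iq q then
        Real.sqrt ((t j) ^ 2 - 1) * ∏ i ∈ Finset.univ.filter (fun i => j < i), t i
      else 0 : ℝ) : ℂ) * h (Function.update t j (q⁻¹ * t j))

lemma one_lt_of_mem_Iq {q : ℝ} (hq0 : 0 < q) (hq1 : q < 1) {x : ℝ} (hx : x ∈ Iq q) : 1 < x := by
  obtain ⟨m, rfl⟩ := hx
  rw [show (-((m:ℤ)+1)) = -(((m+1:ℕ)):ℤ) by push_cast; ring, zpow_neg, zpow_natCast]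
  rw [one_lt_inv_iff₀]
  exact ⟨by positivity, pow_lt_one₀ hq0.le hq1 (by omega)⟩

lemma prod_update {n : ℕ} (t : Fin n → ℝ) (j : Fin n) (a : ℝ) :
    (∏ i ∈ Finset.univ.filter (fun i => j < i), Function.update t j a i)
      = ∏ i ∈ Finset.univ.filter (fun i => j < i), t i := by
  refine Finset.prod_congr rfl fun i hi => ?_
  simp only [Finset.mem_filter] at hi
  exact Function.update_of_ne (ne_of_gt hi.2) _ _

lemma zsop_zop_last {q : ℝ} (hq0 : 0 < q) {n : ℕ} (h : (Fin n → ℝ) → ℂ)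
    (t : Fin n → ℝ) (i : Fin n) (hi : (i : ℕ) + 1 = n) :
    zsop q i (zop q i h) t = (((t i)^2 : ℝ) : ℂ) * h t := by
  simp only [zsop, zop, if_pos hi, Function.update_self, Function.update_idem]
  rw [mul_inv_cancel_left₀ (ne_of_gt hq0), Function.update_eq_self]
  push_cast
  ring

lemma zop_zsop_last {q : ℝ} (hq0 : 0 < q) {n : ℕ} (h : (Fin n → ℝ) → ℂ)
    (t : Fin n → ℝ) (i : Fin n) (hi : (i : ℕ) + 1 = n) :
    zop q i (zsop q i h) t = ((q^2 * (t i)^2 : ℝ) : ℂ) * h t := by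
  simp only [zop, zsop, if_pos hi, Function.update_self, Function.update_idem]
  rw [inv_mul_cancel_left₀ (ne_of_gt hq0), Function.update_eq_self]
  push_cast
  ring

lemma zsop_zop_small {q : ℝ} (hq0 : 0 < q) (hq1 : q < 1) {n : ℕ} (h : (Fin n → ℝ) → ℂ)
    (t : Fin n → ℝ) (i : Fin n) (hi : (i : ℕ) + 1 ≠ n) (hti : t i ∈ Iq q) :
    zsop q i (zop q i h) t =
      ((((t i)^2 - 1) * (∏ k ∈ Finset.univ.filter (fun k => i < k), t k)^2 : ℝ) : ℂ) * h t := by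
  have h1 : (1:ℝ) < t i := one_lt_of_mem_Iq hq0 hq1 hti
  simp only [zsop, zop, if_neg hi, Function.update_self, Function.update_idem]
  rw [mul_inv_cancel_left₀ (ne_of_gt hq0), Function.update_eq_self, if_pos hti,
    prod_update, if_pos hti]
  rw [← mul_assoc, ← Complex.ofReal_mul]
  congr 2
  have hs : Real.sqrt ((t i)^2 - 1) * Real.sqrt ((t i)^2 - 1) = (t i)^2 - 1 :=
    Real.mul_self_sqrt (by nlinarith)
  linear_combination ((∏ k ∈ Finset.univ.filter (fun k => i < k), t k)^2 : ℝ) * hs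

lemma mul_mem_or {q : ℝ} (hq0 : 0 < q) {x : ℝ} (hx : x ∈ Iq q) :
    q * x ∈ Iq q ∨ x = q⁻¹ := by
  obtain ⟨m, rfl⟩ := hx
  rcases m with _ | k
  · right; norm_num [zpow_neg]
  · left
    refine ⟨k, ?_⟩
    have e : (-((k:ℤ)+1)) = (-(((k+1:ℕ):ℤ)+1)) + 1 := by push_cast; ring
    rw [e, zpow_add_one₀ (ne_of_gt hq0), mul_comm]

lemma comm_small {q : ℝ} (hq0 : 0 < q) (hq1 : q < 1) {n : ℕ} (h : (Fin n → ℝ) → ℂ)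
    (t : Fin n → ℝ) (j : Fin n) (hj : (j : ℕ) + 1 ≠ n) (htj : t j ∈ Iq q) :
    zop q j (zsop q j h) t - (q : ℂ)^2 * zsop q j (zop q j h) t =
      ((-(1 - q^2) * (∏ k ∈ Finset.univ.filter (fun k => j < k), t k)^2 : ℝ) : ℂ) * h t := by
  have h1 : (1:ℝ) < t j := one_lt_of_mem_Iq hq0 hq1 htj
  rw [zsop_zop_small hq0 hq1 h t j hj htj]
  simp only [zop, zsop, if_neg hj, Function.update_self, Function.update_idem]
  rw [inv_mul_cancel_left₀ (ne_of_gt hq0), Function.update_eq_self, prod_update]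
  rcases mul_mem_or hq0 htj with hm | hm
  · rw [if_pos hm]
    have h2 : (1:ℝ) < q * t j := one_lt_of_mem_Iq hq0 hq1 hm
    have hs : Real.sqrt ((q * t j)^2 - 1) * Real.sqrt ((q * t j)^2 - 1) = (q * t j)^2 - 1 :=
      Real.mul_self_sqrt (by nlinarith)
    have hsc : ((Real.sqrt ((q * t j)^2 - 1) : ℂ)) * ((Real.sqrt ((q * t j)^2 - 1) : ℂ))
        = ((q : ℂ) * (t j : ℂ))^2 - 1 := by exact_mod_cast hs
    push_cast
    linear_combination (∏ k ∈ Finset.univ.filter (fun k => j < k), ((t k : ℝ) : ℂ))^2 * h t * hsc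
  · have hnm : q * t j ∉ Iq q := by
      rw [hm, mul_inv_cancel₀ (ne_of_gt hq0)]
      intro hc
      exact absurd (one_lt_of_mem_Iq hq0 hq1 hc) (lt_irrefl 1)
    rw [if_neg hnm, hm]
    have hqc : (q : ℂ) ≠ 0 := by exact_mod_cast ne_of_gt hq0
    push_cast
    field_simp
    ring

lemma filter_lt (n : ℕ) (j : Fin n) :
    Finset.univ.filter (fun i => j < i) =
      Finset.univ.filter (fun i : Fin n => (j : ℕ) + 1 ≤ (i : ℕ)) := by
  apply Finset.filter_congr
  intro i _
  simp only [Fin.lt_def]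
  omega

lemma sum_zz {q : ℝ} (hq0 : 0 < q) (hq1 : q < 1) {n : ℕ} (h : (Fin n → ℝ) → ℂ)
    (t : Fin n → ℝ) (ht : ∀ i : Fin n, (i : ℕ) + 1 < n → t i ∈ Iq q) :
    ∀ d m : ℕ, m + d + 1 = n →
      ∑ i ∈ Finset.univ.filter (fun i : Fin n => m ≤ (i : ℕ)), zsop q i (zop q i h) t
        = (((∏ i ∈ Finset.univ.filter (fun i : Fin n => m ≤ (i : ℕ)), t i)^2 : ℝ) : ℂ) * h t := by
  intro d
  induction d with
  | zero =>
    intro m hm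
    have hset : Finset.univ.filter (fun i : Fin n => m ≤ (i : ℕ)) = {⟨m, by omega⟩} := by
      ext i
      simp only [Finset.mem_filter, Finset.mem_univ, true_and, Finset.mem_singleton, Fin.ext_iff]
      omega
    rw [hset, Finset.sum_singleton, Finset.prod_singleton]
    exact zsop_zop_last hq0 h t _ (by simp; omega)
  | succ d ih =>
    intro m hm
    have hnotmem : (⟨m, by omega⟩ : Fin n) ∉
        Finset.univ.filter (fun i : Fin n => m + 1 ≤ (i : ℕ)) := by simp
    have hset : Finset.univ.filter (fun i : Fin n => m ≤ (i : ℕ)) =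
        insert (⟨m, by omega⟩ : Fin n)
          (Finset.univ.filter (fun i : Fin n => m + 1 ≤ (i : ℕ))) := by
      ext i
      simp only [Finset.mem_filter, Finset.mem_univ, true_and, Finset.mem_insert, Fin.ext_iff]
      omega
    rw [hset, Finset.sum_insert hnotmem, Finset.prod_insert hnotmem,
      ih (m + 1) (by omega),
      zsop_zop_small hq0 hq1 h t ⟨m, by omega⟩ (by simp; omega) (ht _ (by simp; omega)),
      filter_lt]
    push_cast
    ring

/-- on the domain D (compactly supported functions supported in
I_q^{n-1} × (0,∞)), asserted pointwise at the points of X_{q,n}: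
z_n z_n* = q² z_n* z_n and, for j < n,
z_j z_j* − q² z_j* z_j = −(1−q²) Σ_{i>j} z_i* z_i. -/
theorem stmt13 (q : ℝ) (hq0 : 0 < q) (hq1 : q < 1) (n : ℕ) (hn : 0 < n)
    (h : (Fin n → ℝ) → ℂ) (hcs : HasCompactSupport h)
    (hsupp : ∀ t : Fin n → ℝ, h t ≠ 0 →
      (∀ j : Fin n, (j : ℕ) + 1 < n → t j ∈ Iq q) ∧ 0 < t ⟨n - 1, by omega⟩) :
    ∀ t : Fin n → ℝ, (∀ i : Fin n, (i : ℕ) + 1 < n → t i ∈ Iq q) → 0 ≤ t ⟨n - 1, by omega⟩ →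
      (zop q ⟨n - 1, by omega⟩ (zsop q ⟨n - 1, by omega⟩ h) t =
        (q : ℂ) ^ 2 * zsop q ⟨n - 1, by omega⟩ (zop q ⟨n - 1, by omega⟩ h) t) ∧
      (∀ j : Fin n, (j : ℕ) + 1 < n →
        zop q j (zsop q j h) t - (q : ℂ) ^ 2 * zsop q j (zop q j h) t =
          -(1 - (q : ℂ) ^ 2) *
            ∑ i ∈ Finset.univ.filter (fun i => j < i), zsop q i (zop q i h) t) := by
  intro t ht _
  constructor
  · rw [zop_zsop_last hq0 h t _ (by simp; omega), zsop_zop_last hq0 h t _ (by simp; omega)]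
    push_cast
    ring
  · intro j hj
    rw [comm_small hq0 hq1 h t j (by omega) (ht j hj), filter_lt,
      sum_zz hq0 hq1 h t ht (n - ((j : ℕ) + 2)) ((j : ℕ) + 1) (by omega)]
    push_cast
    ring
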